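/- The involution ρ(x₀,…,x₅) = (−x₀,−x₁,−x₂,x₃,x₄,x₅) of ℙ⁵ restricted to X = {Σᵢ xᵢ² = 0} ∩ {Σᵢ xᵢ⁴ = 0} has fixed locus consisting of exactly 16 points, namely the points of X lying in the plane {x₀ = x₁ = x₂ = 0} (8 points) together with those in {x₃ = x₄ = x₅ = 0} (8 points). -/

import Mathlib

open scoped LinearAlgebra.Projectivization

/-- The linear involution of `ℂ⁶` negating the first three coordinates. -/
noncomputable def negFirstThree : (Fin 6 → ℂ) ≃ₗ[ℂ] (Fin 6 → ℂ) :=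
  LinearEquiv.piCongrRight fun i : Fin 6 =>
    if (i : ℕ) < 3 then LinearEquiv.neg ℂ else LinearEquiv.refl ℂ ℂ

/-- The induced involution `ρ(x₀,…,x₅) = (-x₀,-x₁,-x₂,x₃,x₄,x₅)` of `ℙ⁵`. -/
noncomputable def rhoP5 : ℙ ℂ (Fin 6 → ℂ) → ℙ ℂ (Fin 6 → ℂ) :=
  Projectivization.map negFirstThree.toLinearMap negFirstThree.injective

/-- `X ⊂ ℙ⁵`: the intersection of the Fermat quadric and the Fermat quartic. -/
def fermatX : Set (ℙ ℂ (Fin 6 → ℂ)) :=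
  {P | (∑ i, P.rep i ^ 2 = 0) ∧ (∑ i, P.rep i ^ 4 = 0)}

/-! A nonzero `v` spans a `ρ`-fixed line iff `ρ v = ± v`, i.e. iff `v` lies in one of the two
eigenspaces `{x₀ = x₁ = x₂ = 0}`, `{x₃ = x₄ = x₅ = 0}`. Each of them meets `X` in a copy of the
plane curve `C = {y² + z² + w² = 0 = y⁴ + z⁴ + w⁴} ⊂ ℙ²`, so it remains to see `#C = 8`. On `C`,
`2 (y²z² + z²w² + w²y²) = (y² + z² + w²)² - (y⁴ + z⁴ + w⁴) = 0`, which forces `w ≠ 0`; in the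
chart `w = 1` we get `y²z² = 1`, `y² + z² = -1`, so `{y², z²} = {ω, ω²}` for a primitive cube
root of unity `ω`, and each choice of the two square roots gives a point: `2 · 2 · 2 = 8`. -/

open Projectivization

theorem exists_smul_eq_ite_neg_iff {ι K : Type*} [Field K] [NeZero (2 : K)] (p : ι → Prop)
    [DecidablePred p] (v : ι → K) :
    (∃ a : K, a • v = fun i => if p i then -v i else v i) ↔
      (∀ i, p i → v i = 0) ∨ (∀ i, ¬p i → v i = 0) := by
  constructor
  · rintro ⟨a, ha⟩
    by_contra! ⟨⟨j, hj, hvj⟩, ⟨k, hk, hvk⟩⟩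
    have hj' : a * v j = -1 * v j := by simpa [hj] using congrFun ha j
    have hk' : a * v k = 1 * v k := by simpa [hk] using congrFun ha k
    have : (-1 : K) = 1 := (mul_right_cancel₀ hvj hj').symm.trans (mul_right_cancel₀ hvk hk')
    exact two_ne_zero (by linear_combination -this : (2 : K) = 0)
  · rintro (h | h)
    · exact ⟨1, funext fun i => by by_cases hi : p i <;> simp [hi, h i]⟩
    · exact ⟨-1, funext fun i => by by_cases hi : p i <;> simp [hi, h i]⟩

theorem rhoP5_eq_self_iff (P : ℙ ℂ (Fin 6 → ℂ)) :
    rhoP5 P = P ↔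
      (∀ i : Fin 6, i.val < 3 → P.rep i = 0) ∨ (∀ i : Fin 6, ¬i.val < 3 → P.rep i = 0) := by
  have hneg : negFirstThree P.rep = fun i => if i.val < 3 then -P.rep i else P.rep i := by
    funext i
    by_cases hi : i.val < 3 <;> simp [negFirstThree, hi]
  conv_lhs => rw [← P.mk_rep, rhoP5, map_mk, mk_eq_mk_iff']
  rw [LinearEquiv.coe_coe, hneg]
  exact exists_smul_eq_ite_neg_iff _ P.rep

theorem Fintype.sum_pow_eq_sum_pow_comp {ι κ R : Type*} [Fintype ι] [Fintype κ] [Semiring R]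
    {σ : κ → ι} (hσ : σ.Injective) {v : ι → R} (hv : ∀ i ∉ Set.range σ, v i = 0) {n : ℕ}
    (hn : n ≠ 0) :
    ∑ i, v i ^ n = ∑ j, v (σ j) ^ n :=
  (Fintype.sum_of_injective σ hσ _ _ (fun i hi => by simp [hv i hi, hn]) fun _ => rfl).symm

theorem Function.ExtendByZero.linearMap_injective {ι κ R : Type*} [Semiring R] {σ : κ → ι}
    (hσ : σ.Injective) : Function.Injective (Function.ExtendByZero.linearMap R σ) :=
  Function.extend_injective hσ (0 : ι → R)

def fermatLocus (ι K : Type*) [Fintype ι] [Field K] : Set (ℙ K (ι → K)) :=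
  {P | ∑ i, P.rep i ^ 2 = 0 ∧ ∑ i, P.rep i ^ 4 = 0}

theorem fermatX_eq_fermatLocus : fermatX = fermatLocus (Fin 6) ℂ := rfl

section FermatLocus

variable {ι κ K : Type*} [Fintype ι] [Fintype κ] [Field K]

theorem mk_mem_fermatLocus_iff {v : ι → K} (hv : v ≠ 0) :
    mk K v hv ∈ fermatLocus ι K ↔ ∑ i, v i ^ 2 = 0 ∧ ∑ i, v i ^ 4 = 0 := by
  obtain ⟨a, ha⟩ := exists_smul_eq_mk_rep K v hv
  simp [fermatLocus, ← ha, Units.smul_def, mul_pow, ← Finset.mul_sum]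

theorem image_map_extendByZero_fermatLocus (σ : κ ↪ ι) :
    map (Function.ExtendByZero.linearMap K σ)
        (Function.ExtendByZero.linearMap_injective σ.injective) '' fermatLocus κ K =
      {P | P ∈ fermatLocus ι K ∧ ∀ i ∉ Set.range σ, P.rep i = 0} := by
  ext P
  constructor
  · rintro ⟨Q, hQ, rfl⟩
    induction Q using ind with | h w hw =>
    have hvσ : ∀ j, Function.extend σ w 0 (σ j) = w j := σ.injective.extend_apply w 0
    have hv : ∀ i ∉ Set.range σ, Function.extend σ w 0 i = 0 := fun i hi =>
      Function.extend_apply' _ _ _ hi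
    obtain ⟨a, ha⟩ := exists_smul_eq_mk_rep K _
      ((map_ne_zero_iff _ (Function.ExtendByZero.linearMap_injective σ.injective)).2 hw)
    rw [mk_mem_fermatLocus_iff] at hQ
    rw [map_mk, Set.mem_ofPred_eq, mk_mem_fermatLocus_iff, ← ha]
    refine ⟨?_, fun i hi => by simp [hv i hi]⟩
    simpa only [Function.ExtendByZero.linearMap_apply,
      Fintype.sum_pow_eq_sum_pow_comp σ.injective hv two_ne_zero,
      Fintype.sum_pow_eq_sum_pow_comp σ.injective hv four_ne_zero, hvσ] using hQ
  · rintro ⟨⟨h2, h4⟩, hvan⟩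
    have hext : Function.extend σ (P.rep ∘ σ) 0 = P.rep := by
      funext i
      by_cases hi : i ∈ Set.range σ
      · obtain ⟨j, rfl⟩ := hi
        exact σ.injective.extend_apply _ _ j
      · rw [Function.extend_apply' _ _ _ hi, hvan i hi, Pi.zero_apply]
    have hw : P.rep ∘ σ ≠ 0 := fun h => P.rep_nonzero (by rw [← hext, h, Function.extend_zero])
    refine ⟨mk K _ hw, ?_, ?_⟩
    · rw [Fintype.sum_pow_eq_sum_pow_comp σ.injective hvan two_ne_zero] at h2
      rw [Fintype.sum_pow_eq_sum_pow_comp σ.injective hvan four_ne_zero] at h4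
      exact (mk_mem_fermatLocus_iff hw).2 ⟨h2, h4⟩
    · conv_rhs => rw [← P.mk_rep]
      exact (mk_eq_mk_iff' K _ _ _ _).2 ⟨1, by rw [one_smul]; exact hext.symm⟩

theorem natCard_fermatLocus_inter_plane (σ : κ ↪ ι) :
    Nat.card {P | P ∈ fermatLocus ι K ∧ ∀ i ∉ Set.range σ, P.rep i = 0} =
      Nat.card (fermatLocus κ K) := by
  rw [← image_map_extendByZero_fermatLocus σ, Nat.card_image_of_injective (map_injective _ _)]

end FermatLocus

section PlaneCurve

variable {K : Type*} [Field K]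

theorem vecCons_one_ne_zero (y z : K) : (![y, z, 1] : Fin 3 → K) ≠ 0 :=
  fun h => one_ne_zero (congrFun h 2)

def affinePoint (p : K × K) : ℙ K (Fin 3 → K) := mk K ![p.1, p.2, 1] (vecCons_one_ne_zero _ _)

theorem affinePoint_injective : Function.Injective (affinePoint (K := K)) := by
  rintro ⟨y, z⟩ ⟨y', z'⟩ h
  obtain ⟨a, ha⟩ := (mk_eq_mk_iff' K _ _ _ _).1 h
  have ha1 : a = 1 := by simpa using congrFun ha 2
  simp only [ha1, one_smul] at ha
  exact Prod.ext (congrFun ha 0).symm (congrFun ha 1).symm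

variable [NeZero (2 : K)]

theorem eq_zero_of_sq_add_sq_eq_zero_of_pow_four_add_pow_four_eq_zero {a b : K}
    (h2 : a ^ 2 + b ^ 2 = 0) (h4 : a ^ 4 + b ^ 4 = 0) : a = 0 ∧ b = 0 := by
  have hab : a ^ 2 * b ^ 2 = 0 := by
    have : (2 : K) * (a ^ 2 * b ^ 2) = 0 := by linear_combination (a ^ 2 + b ^ 2) * h2 - h4
    exact (mul_eq_zero.1 this).resolve_left two_ne_zero
  rcases mul_eq_zero.1 hab with ha | hb
  · have ha := pow_eq_zero_iff two_ne_zero |>.1 ha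
    exact ⟨ha, pow_eq_zero_iff two_ne_zero |>.1 (by linear_combination h2 - a * ha)⟩
  · have hb := pow_eq_zero_iff two_ne_zero |>.1 hb
    exact ⟨pow_eq_zero_iff two_ne_zero |>.1 (by linear_combination h2 - b * hb), hb⟩

theorem rep_two_ne_zero_of_mem_fermatLocus {P : ℙ K (Fin 3 → K)}
    (hP : P ∈ fermatLocus (Fin 3) K) : P.rep 2 ≠ 0 := by
  intro h
  obtain ⟨h2, h4⟩ := hP
  simp only [Fin.sum_univ_three, h] at h2 h4
  obtain ⟨h0, h1⟩ := eq_zero_of_sq_add_sq_eq_zero_of_pow_four_add_pow_four_eq_zero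
    (by simpa using h2) (by simpa using h4)
  exact P.rep_nonzero (funext fun i => by fin_cases i <;> assumption)

theorem fermatLocus_fin_three_eq_image_affinePoint :
    fermatLocus (Fin 3) K =
      affinePoint '' {p | p.1 ^ 2 + p.2 ^ 2 + 1 = 0 ∧ p.1 ^ 4 + p.2 ^ 4 + 1 = 0} := by
  ext P
  constructor
  · intro hP
    have hw := rep_two_ne_zero_of_mem_fermatLocus hP
    obtain ⟨h2, h4⟩ := hP
    simp only [Fin.sum_univ_three] at h2 h4
    refine ⟨(P.rep 0 / P.rep 2, P.rep 1 / P.rep 2), ⟨?_, ?_⟩, ?_⟩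
    · field_simp
      linear_combination h2
    · field_simp
      linear_combination h4
    · conv_rhs => rw [← P.mk_rep]
      refine (mk_eq_mk_iff' K _ _ _ _).2 ⟨(P.rep 2)⁻¹, funext fun i => ?_⟩
      fin_cases i <;> simp [div_eq_inv_mul, hw]
  · rintro ⟨⟨y, z⟩, ⟨h2, h4⟩, rfl⟩
    rw [affinePoint, mk_mem_fermatLocus_iff]
    simp [Fin.sum_univ_three, h2, h4]

end PlaneCurve

section EightPoints

variable {K : Type*} [Field K] [DecidableEq K]

def fermatPairs (ω : K) : Finset (K × K) :=
  ({ω, -ω} ×ˢ {ω ^ 2, -ω ^ 2}) ∪ ({ω ^ 2, -ω ^ 2} ×ˢ {ω, -ω})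

variable [NeZero (2 : K)] {ω : K} (hω : ω ^ 2 + ω + 1 = 0)
include hω

theorem mem_fermatPairs_iff {y z : K} :
    (y, z) ∈ fermatPairs ω ↔ y ^ 2 + z ^ 2 + 1 = 0 ∧ y ^ 4 + z ^ 4 + 1 = 0 := by
  simp only [fermatPairs, Finset.mem_union, Finset.mem_product, Finset.mem_insert,
    Finset.mem_singleton]
  constructor
  · rintro (⟨hy | hy, hz | hz⟩ | ⟨hy | hy, hz | hz⟩) <;> rw [hy, hz] <;>
      exact ⟨by linear_combination (ω ^ 2 - ω + 1) * hω,
        by linear_combination (ω ^ 2 - ω + 1) * (ω ^ 4 - ω ^ 2 + 1) * hω⟩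
  · rintro ⟨h2, h4⟩
    have hyz : y ^ 2 * z ^ 2 = 1 := by
      refine mul_left_cancel₀ (two_ne_zero (α := K)) ?_
      linear_combination (y ^ 2 + z ^ 2 - 1) * h2 - h4
    -- `y²` and `z²` are the two roots of `t² + t + 1`, and `ω⁴ = ω`
    have hy : (y ^ 2 - ω) * (y ^ 2 - ω ^ 2) = 0 := by
      linear_combination y ^ 2 * h2 - hyz + (ω - 1 - y ^ 2) * hω
    simp only [← sq_eq_sq_iff_eq_or_eq_neg]
    rcases mul_eq_zero.1 hy with hy | hy
    · right
      exact ⟨by linear_combination hy - (ω ^ 2 - ω) * hω, by linear_combination h2 - hy - hω⟩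
    · left
      exact ⟨by linear_combination hy,
        by linear_combination h2 - hy - (ω ^ 2 - ω + 1) * hω⟩

theorem card_fermatPairs [NeZero (3 : K)] : (fermatPairs ω).card = 8 := by
  have hω0 : ω ≠ 0 := by rintro rfl; norm_num at hω
  have hne_neg : ∀ x : K, x ≠ 0 → x ≠ -x := fun x hx h =>
    hx ((mul_eq_zero.1 (by linear_combination h : (2 : K) * x = 0)).resolve_left two_ne_zero)
  have hne : ω ≠ ω ^ 2 := fun h => three_ne_zero (α := K)
    (by linear_combination -(2 * ω + 1) * h + (3 - 2 * ω) * hω)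
  have hne' : ω ≠ -ω ^ 2 := fun h => one_ne_zero (α := K) (by linear_combination hω - h)
  have hdisj : Disjoint ({ω, -ω} : Finset K) {ω ^ 2, -ω ^ 2} := by
    simp only [Finset.disjoint_insert_left, Finset.disjoint_insert_right,
      Finset.disjoint_singleton, Finset.mem_insert, Finset.mem_singleton]
    exact ⟨not_or.2 ⟨hne.symm, fun h => hne' (by linear_combination h)⟩, hne',
      fun h => hne (neg_inj.1 h)⟩
  rw [fermatPairs, Finset.card_union_of_disjoint (Finset.disjoint_product.2 (Or.inl hdisj)),
    Finset.card_product, Finset.card_product, Finset.card_pair (hne_neg ω hω0),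
    Finset.card_pair (hne_neg _ (pow_ne_zero 2 hω0))]

end EightPoints

section PlaneCount

variable {K : Type*} [Field K] [NeZero (2 : K)] [NeZero (3 : K)]

theorem natCard_fermatLocus_fin_three_of_sq_add_self_add_one {ω : K}
    (hω : ω ^ 2 + ω + 1 = 0) : Nat.card (fermatLocus (Fin 3) K) = 8 := by
  classical
  have hpairs : {p : K × K | p.1 ^ 2 + p.2 ^ 2 + 1 = 0 ∧ p.1 ^ 4 + p.2 ^ 4 + 1 = 0} =
      ↑(fermatPairs ω) := by
    ext ⟨y, z⟩
    exact (mem_fermatPairs_iff hω).symm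
  rw [fermatLocus_fin_three_eq_image_affinePoint,
    Nat.card_image_of_injective affinePoint_injective, hpairs, Nat.card_coe_set_eq,
    Set.ncard_coe_finset, card_fermatPairs hω]

theorem natCard_fermatLocus_fin_three [IsAlgClosed K] : Nat.card (fermatLocus (Fin 3) K) = 8 := by
  obtain ⟨s, hs⟩ := IsAlgClosed.exists_eq_mul_self (-3 : K)
  refine natCard_fermatLocus_fin_three_of_sq_add_self_add_one (ω := (s - 1) / 2) ?_
  field_simp
  linear_combination -hs

end PlaneCount

section FinSix

theorem mem_range_natAddEmb_iff (i : Fin 6) :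
    i ∈ Set.range (Fin.natAddEmb 3 : Fin 3 ↪ Fin 6) ↔ 3 ≤ i.val := by
  constructor
  · rintro ⟨j, rfl⟩
    exact Nat.le_add_right 3 j
  · intro h
    exact ⟨⟨i - 3, by omega⟩, Fin.ext (show 3 + (i.val - 3) = i.val by omega)⟩

theorem mem_range_castAddEmb_iff (i : Fin 6) :
    i ∈ Set.range (Fin.castAddEmb 3 : Fin 3 ↪ Fin 6) ↔ i.val < 3 := by
  constructor
  · rintro ⟨j, rfl⟩
    exact j.isLt
  · intro h
    exact ⟨⟨i, h⟩, rfl⟩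

variable {M : Type*} [Zero M] (v : Fin 6 → M)

theorem forall_lt_three_imp_eq_zero_iff :
    (∀ i : Fin 6, i.val < 3 → v i = 0) ↔ v 0 = 0 ∧ v 1 = 0 ∧ v 2 = 0 := by
  refine ⟨fun h => ⟨h 0 (by decide), h 1 (by decide), h 2 (by decide)⟩, ?_⟩
  rintro ⟨h0, h1, h2⟩ i hi
  fin_cases i <;> simp_all

theorem forall_not_lt_three_imp_eq_zero_iff :
    (∀ i : Fin 6, ¬i.val < 3 → v i = 0) ↔ v 3 = 0 ∧ v 4 = 0 ∧ v 5 = 0 := by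
  refine ⟨fun h => ⟨h 3 (by decide), h 4 (by decide), h 5 (by decide)⟩, ?_⟩
  rintro ⟨h3, h4, h5⟩ i hi
  fin_cases i <;> simp_all

end FinSix

theorem natCard_fermatX_inter_rep_first_three_eq_zero :
    Nat.card {P | P ∈ fermatX ∧ P.rep 0 = 0 ∧ P.rep 1 = 0 ∧ P.rep 2 = 0} = 8 := by
  simp_rw [fermatX_eq_fermatLocus, ← forall_lt_three_imp_eq_zero_iff, ← not_le,
    ← mem_range_natAddEmb_iff]
  rw [natCard_fermatLocus_inter_plane, natCard_fermatLocus_fin_three]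

theorem natCard_fermatX_inter_rep_last_three_eq_zero :
    Nat.card {P | P ∈ fermatX ∧ P.rep 3 = 0 ∧ P.rep 4 = 0 ∧ P.rep 5 = 0} = 8 := by
  simp_rw [fermatX_eq_fermatLocus, ← forall_not_lt_three_imp_eq_zero_iff,
    ← mem_range_castAddEmb_iff]
  rw [natCard_fermatLocus_inter_plane, natCard_fermatLocus_fin_three]

/-- The fixed locus of `ρ` on `X` consists of exactly 16 points, namely the
points of `X` lying in `{x₀ = x₁ = x₂ = 0}` (8 points) together with those in
`{x₃ = x₄ = x₅ = 0}` (8 points). -/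
theorem stmt_10 :
    ({P | P ∈ fermatX ∧ rhoP5 P = P} =
      {P ∈ fermatX | P.rep 0 = 0 ∧ P.rep 1 = 0 ∧ P.rep 2 = 0} ∪
      {P ∈ fermatX | P.rep 3 = 0 ∧ P.rep 4 = 0 ∧ P.rep 5 = 0}) ∧
    Nat.card {P // P ∈ fermatX ∧ P.rep 0 = 0 ∧ P.rep 1 = 0 ∧ P.rep 2 = 0} = 8 ∧
    Nat.card {P // P ∈ fermatX ∧ P.rep 3 = 0 ∧ P.rep 4 = 0 ∧ P.rep 5 = 0} = 8 ∧
    Nat.card {P // P ∈ fermatX ∧ rhoP5 P = P} = 16 := by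
  set A := {P ∈ fermatX | P.rep 0 = 0 ∧ P.rep 1 = 0 ∧ P.rep 2 = 0}
  set B := {P ∈ fermatX | P.rep 3 = 0 ∧ P.rep 4 = 0 ∧ P.rep 5 = 0}
  have hfix : {P | P ∈ fermatX ∧ rhoP5 P = P} = A ∪ B := by
    ext P
    simp only [A, B, Set.mem_ofPred_eq, Set.mem_union, rhoP5_eq_self_iff,
      forall_lt_three_imp_eq_zero_iff, forall_not_lt_three_imp_eq_zero_iff, and_or_left]
  have hA : Nat.card A = 8 := natCard_fermatX_inter_rep_first_three_eq_zero
  have hB : Nat.card B = 8 := natCard_fermatX_inter_rep_last_three_eq_zero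
  have hAB : Disjoint A B := Set.disjoint_left.2 fun P ⟨_, h012⟩ ⟨_, h345⟩ =>
    P.rep_nonzero (funext fun i => by fin_cases i <;> simp [h012, h345])
  refine ⟨hfix, hA, hB, ?_⟩
  rw [Nat.card_coe_set_eq] at hA hB
  calc Nat.card {P // P ∈ fermatX ∧ rhoP5 P = P} = (A ∪ B).ncard := by
        rw [← hfix]; exact Nat.card_coe_set_eq _
    _ = 16 := by
        rw [Set.ncard_union_eq hAB (Set.finite_of_ncard_pos (by omega))
          (Set.finite_of_ncard_pos (by omega)), hA, hB]
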